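/- Let v : ℝ³ → ℝ² and θ : ℝ³ → ℝ be smooth and 1-periodic in the horizontal variables, and suppose that ∫_{−h}^0 div_H v(x_H,ζ) dζ = 0 for every x_H (equivalently, w(v)(x_H,0) = 0). Set w(v)(x_H,x₃) = −∫_{−h}^{x₃} div_H v(x_H,ζ) dζ, u = (v, w(v)) : ℝ³ → ℝ³, and Θ(x_H,x₃) = ∫_{−h}^{x₃} θ(x_H,ζ) dζ. Then ∫_𝒪 Θ² ⟨v, (u·∇)v⟩ dx + ∫_𝒪 ‖v‖² Θ ( ∫_{−h}^{x₃} [(u·∇)θ](x_H,ζ) dζ ) dx = ∫_𝒪 ‖v‖² Θ [ ∫_{−h}^{x₃} [(v·∇_H)θ](x_H,ζ) dζ − [(v·∇_H)Θ](x) + ∫_{−h}^{x₃} div_H v(x_H,ζ) · θ(x_H,ζ) dζ ] dx, where ‖·‖ and ⟨·,·⟩ are the Euclidean norm and inner product on ℝ². -/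

import Mathlib

open MeasureTheory Real

noncomputable section

/-- Partial derivative of `f` in the `j`-th coordinate direction. -/
def pd (j : Fin 3) (f : (Fin 3 → ℝ) → ℝ) (x : Fin 3 → ℝ) : ℝ :=
  fderiv ℝ f x (Pi.single j 1)

/-- `f` is 1-periodic in the two horizontal variables. -/
def HorizPeriodic (f : (Fin 3 → ℝ) → ℝ) : Prop :=
  ∀ x : Fin 3 → ℝ, f (x + Pi.single 0 1) = f x ∧ f (x + Pi.single 1 1) = f x

/-- The fundamental domain `[0,1] × [0,1] × [-h,0]` of `𝒪 = 𝕋² × (-h,0)`. -/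
def Box (h : ℝ) : Set (Fin 3 → ℝ) := Set.Icc ![0, 0, -h] ![1, 1, 0]

/-- Horizontal divergence `div_H v = ∂₁ v¹ + ∂₂ v²`. -/
def divH (v : Fin 2 → (Fin 3 → ℝ) → ℝ) (x : Fin 3 → ℝ) : ℝ :=
  pd 0 (v 0) x + pd 1 (v 1) x

/-- Horizontal advection `(v · ∇_H) g = v¹ ∂₁ g + v² ∂₂ g`. -/
def advH (v : Fin 2 → (Fin 3 → ℝ) → ℝ) (g : (Fin 3 → ℝ) → ℝ) (x : Fin 3 → ℝ) : ℝ :=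
  v 0 x * pd 0 g x + v 1 x * pd 1 g x

/-- Advection `(u · ∇) g` by the full velocity field `u = (v, w)`. -/
def adv3 (v : Fin 2 → (Fin 3 → ℝ) → ℝ) (w g : (Fin 3 → ℝ) → ℝ) (x : Fin 3 → ℝ) : ℝ :=
  v 0 x * pd 0 g x + v 1 x * pd 1 g x + w x * pd 2 g x

/-- Vertical velocity `w(v)(x) = -∫_{-h}^{x₃} div_H v (x_H, ζ) dζ`. -/
def wv (h : ℝ) (v : Fin 2 → (Fin 3 → ℝ) → ℝ) (x : Fin 3 → ℝ) : ℝ :=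
  -(∫ ζ in (-h)..(x 2), divH v (Function.update x 2 ζ))

/-- Vertical primitive `Θ(x) = ∫_{-h}^{x₃} θ(x_H, ζ) dζ`. -/
def vint (h : ℝ) (θ : (Fin 3 → ℝ) → ℝ) (x : Fin 3 → ℝ) : ℝ :=
  ∫ ζ in (-h)..(x 2), θ (Function.update x 2 ζ)


/-!
Integrating by parts in `x₃`, with `w(v) = 0` at `x₃ = -h` and `∂₃ w(v) = -div_H v`, turns
`∫_{-h}^{x₃} (u·∇)θ` into `∫_{-h}^{x₃} (v·∇_H)θ + w(v) θ + ∫_{-h}^{x₃} div_H v θ`. Since `∂₃Θ = θ`,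
`(v·∇_H)Θ + w(v) θ = (u·∇)Θ`, so the difference of the two sides is `½ ∫_𝒪 (u·∇)(Θ² ‖v‖²)`.
The field `u = (v, w(v))` is divergence free, so this is the flux of `u Θ² ‖v‖²` through `∂𝒪`:
the lateral fluxes cancel by periodicity, and `w(v)` vanishes on the bottom by definition and on
the top by the hypothesis `∫_{-h}^0 div_H v = 0`.
-/

open intervalIntegral Function

section VerticalPrimitive

variable {G : (Fin 3 → ℝ) → ℝ}

def horizProj : (Fin 3 → ℝ) →L[ℝ] (Fin 3 → ℝ) :=
  ContinuousLinearMap.id ℝ _ - (ContinuousLinearMap.proj 2).smulRight (Pi.single 2 1)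

lemma update_two_eq_horizProj_add (x : Fin 3 → ℝ) (ζ : ℝ) :
    update x 2 ζ = horizProj x + ζ • Pi.single 2 1 := by
  ext i; fin_cases i <;> simp [horizProj]

lemma horizProj_single_two : horizProj (Pi.single 2 1) = 0 := by
  ext i; fin_cases i <;> simp [horizProj]

lemma dist_update_two_le {x y : Fin 3 → ℝ} {ζ : ℝ} (hζ : ζ ∈ Set.uIcc (x 2) (y 2)) :
    dist (update y 2 ζ) x ≤ dist y x := by
  refine (dist_pi_le_iff dist_nonneg).2 fun i => ?_
  rcases eq_or_ne i 2 with rfl | hi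
  · rw [update_self]
    calc dist ζ (x 2) ≤ dist (y 2) (x 2) := by
          simpa only [Real.dist_eq] using Set.abs_sub_left_of_mem_uIcc hζ
      _ ≤ dist y x := dist_le_pi_dist y x 2
  · rw [update_of_ne hi]; exact dist_le_pi_dist y x i

lemma hasFDerivAt_comp_update_two {x : Fin 3 → ℝ} {ζ : ℝ}
    (hG : DifferentiableAt ℝ G (update x 2 ζ)) :
    HasFDerivAt (fun y => G (update y 2 ζ)) ((fderiv ℝ G (update x 2 ζ)).comp horizProj) x := by
  have hA : HasFDerivAt (fun y => horizProj y + ζ • (Pi.single 2 1 : Fin 3 → ℝ)) horizProj x :=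
    horizProj.hasFDerivAt.add_const _
  rw [funext fun y => (update_two_eq_horizProj_add y ζ).symm] at hA
  exact hG.hasFDerivAt.comp x hA

lemma hasDerivAt_comp_update_two {x : Fin 3 → ℝ} {t : ℝ}
    (hG : DifferentiableAt ℝ G (update x 2 t)) :
    HasDerivAt (fun t => G (update x 2 t)) (pd 2 G (update x 2 t)) t := by
  have hA : HasDerivAt (fun t => horizProj x + t • (Pi.single 2 1 : Fin 3 → ℝ)) (Pi.single 2 1) t :=
    ((hasDerivAt_id t).smul_const _).const_add _ |>.congr_deriv (one_smul _ _)
  rw [funext fun t => (update_two_eq_horizProj_add x t).symm] at hA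
  exact hG.hasFDerivAt.comp_hasDerivAt t hA

lemma hasFDerivAt_integral_comp_update_two (hG : ContDiff ℝ 1 G) (a b : ℝ) (x : Fin 3 → ℝ) :
    HasFDerivAt (fun y => ∫ ζ in a..b, G (update y 2 ζ))
      (∫ ζ in a..b, (fderiv ℝ G (update x 2 ζ)).comp horizProj) x := by
  have hG' : Continuous fun p : (Fin 3 → ℝ) × ℝ =>
      (fderiv ℝ G (update p.1 2 p.2)).comp horizProj := by fun_prop
  obtain ⟨C, hC⟩ := ((isCompact_closedBall x 1).prod isCompact_uIcc).exists_bound_of_continuousOn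
    (s := Metric.closedBall x 1 ×ˢ Set.uIcc a b) hG'.continuousOn
  refine hasFDerivAt_integral_of_dominated_of_fderiv_le (bound := fun _ => C)
    (F := fun y ζ => G (update y 2 ζ))
    (F' := fun y ζ => (fderiv ℝ G (update y 2 ζ)).comp horizProj)
    (Metric.ball_mem_nhds x one_pos) ?_ ?_ ?_ ?_ intervalIntegrable_const ?_
  · exact .of_forall fun y => Continuous.aestronglyMeasurable (by fun_prop)
  · exact Continuous.intervalIntegrable (by fun_prop) a b
  · exact Continuous.aestronglyMeasurable (by fun_prop)
  · exact ae_of_all _ fun ζ hζ y hy =>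
      hC (y, ζ) ⟨Metric.ball_subset_closedBall hy, Set.uIoc_subset_uIcc hζ⟩
  · exact ae_of_all _ fun ζ _ y _ =>
      hasFDerivAt_comp_update_two ((hG.differentiable one_ne_zero) _)

lemma hasFDerivAt_integral_upper_comp_update_two (hG : Continuous G) (x : Fin 3 → ℝ) :
    HasFDerivAt (fun y => ∫ ζ in x 2..y 2, G (update y 2 ζ))
      (G x • ContinuousLinearMap.proj (R := ℝ) (φ := fun _ : Fin 3 => ℝ) 2) x := by
  rw [hasFDerivAt_iff_isLittleO, Asymptotics.isLittleO_iff]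
  intro c hc
  obtain ⟨δ, hδ, hGδ⟩ := Metric.continuousAt_iff.mp hG.continuousAt c hc
  filter_upwards [Metric.ball_mem_nhds x hδ] with y hy
  have hrem : (∫ ζ in x 2..y 2, G (update y 2 ζ)) - G x * (y 2 - x 2)
      = ∫ ζ in x 2..y 2, (G (update y 2 ζ) - G x) := by
    rw [integral_sub (Continuous.intervalIntegrable (by fun_prop) _ _) intervalIntegrable_const,
      intervalIntegral.integral_const, smul_eq_mul, mul_comm]
  simp only [integral_same, sub_zero, FunLike.coe_smul, Pi.smul_apply,
    ContinuousLinearMap.proj_apply, Pi.sub_apply, smul_eq_mul, hrem]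
  calc ‖∫ ζ in x 2..y 2, (G (update y 2 ζ) - G x)‖ ≤ c * |y 2 - x 2| := by
        refine norm_integral_le_of_norm_le_const fun ζ hζ => ?_
        rw [← dist_eq_norm]
        exact (hGδ ((dist_update_two_le (Set.uIoc_subset_uIcc hζ)).trans_lt hy)).le
    _ ≤ c * ‖y - x‖ := by
        gcongr
        exact norm_le_pi_norm (y - x) 2

lemma hasFDerivAt_vint (hG : ContDiff ℝ 1 G) (h : ℝ) (x : Fin 3 → ℝ) :
    HasFDerivAt (vint h G)
      ((∫ ζ in (-h)..x 2, (fderiv ℝ G (update x 2 ζ)).comp horizProj)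
        + G x • ContinuousLinearMap.proj (R := ℝ) (φ := fun _ : Fin 3 => ℝ) 2) x := by
  have hsplit : vint h G = fun y =>
      (∫ ζ in (-h)..x 2, G (update y 2 ζ)) + ∫ ζ in x 2..y 2, G (update y 2 ζ) := by
    funext y
    have hint (s t : ℝ) : IntervalIntegrable (fun ζ => G (update y 2 ζ)) volume s t :=
      Continuous.intervalIntegrable (by fun_prop) s t
    exact (integral_add_adjacent_intervals (hint _ _) (hint _ _)).symm
  rw [hsplit]
  exact (hasFDerivAt_integral_comp_update_two hG _ _ x).add
    (hasFDerivAt_integral_upper_comp_update_two hG.continuous x)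

@[fun_prop]
lemma continuous_vint (hG : Continuous G) (h : ℝ) : Continuous (vint h G) :=
  continuous_parametric_intervalIntegral_of_continuous (f := fun x ζ => G (update x 2 ζ))
    (by fun_prop) (continuous_apply 2)

lemma contDiff_one_vint (hG : ContDiff ℝ 1 G) (h : ℝ) : ContDiff ℝ 1 (vint h G) := by
  refine contDiff_one_iff_fderiv.2 ⟨fun x => (hasFDerivAt_vint hG h x).differentiableAt, ?_⟩
  rw [funext fun x => (hasFDerivAt_vint hG h x).fderiv]
  refine .add ?_ (by fun_prop)
  exact continuous_parametric_intervalIntegral_of_continuous (by fun_prop) (continuous_apply 2)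

lemma pd_two_vint (hG : ContDiff ℝ 1 G) (h : ℝ) (x : Fin 3 → ℝ) : pd 2 (vint h G) x = G x := by
  have hint : IntervalIntegrable (fun ζ => (fderiv ℝ G (update x 2 ζ)).comp horizProj)
      volume (-h) (x 2) :=
    Continuous.intervalIntegrable (by fun_prop) _ _
  simp [pd, (hasFDerivAt_vint hG h x).fderiv, ContinuousLinearMap.intervalIntegral_apply hint,
    horizProj_single_two]

lemma update_two_add_single {j : Fin 3} (hj : j ≠ 2) (x : Fin 3 → ℝ) (ζ : ℝ) :
    update (x + Pi.single j 1) 2 ζ = update x 2 ζ + Pi.single j 1 := by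
  ext i
  rcases eq_or_ne i 2 with rfl | hi
  · simp [Pi.single_eq_of_ne' hj]
  · simp [update_of_ne hi]

lemma vint_add_single {j : Fin 3} (hj : j ≠ 2) (hG : ∀ y, G (y + Pi.single j 1) = G y)
    (h : ℝ) (x : Fin 3 → ℝ) : vint h G (x + Pi.single j 1) = vint h G x := by
  have hx2 : (x + Pi.single j 1 : Fin 3 → ℝ) 2 = x 2 := by simp [Pi.single_eq_of_ne' hj]
  simp only [vint, hx2, update_two_add_single hj, hG]

lemma HorizPeriodic.vint (hG : HorizPeriodic G) (h : ℝ) : HorizPeriodic (vint h G) := fun x =>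
  ⟨vint_add_single (by decide) (fun y => (hG y).1) h x,
    vint_add_single (by decide) (fun y => (hG y).2) h x⟩

end VerticalPrimitive

section PartialDerivatives

variable {f g : (Fin 3 → ℝ) → ℝ} {x : Fin 3 → ℝ}

@[fun_prop]
lemma continuous_pd (hf : ContDiff ℝ 1 f) (j : Fin 3) : Continuous (pd j f) :=
  (hf.continuous_fderiv one_ne_zero).clm_apply continuous_const

lemma contDiff_pd {n : ℕ} (hf : ContDiff ℝ (n + 1) f) (j : Fin 3) : ContDiff ℝ n (pd j f) :=
  (hf.fderiv_right (m := n) le_rfl).clm_apply contDiff_const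

lemma pd_mul (hf : DifferentiableAt ℝ f x) (hg : DifferentiableAt ℝ g x) (j : Fin 3) :
    pd j (fun y => f y * g y) x = pd j f x * g x + f x * pd j g x := by
  simp [pd, fderiv_fun_mul hf hg]; ring

lemma pd_neg (j : Fin 3) : pd j (fun y => -f y) x = -pd j f x := by
  simp [pd, fderiv_fun_neg]

variable {v : Fin 2 → (Fin 3 → ℝ) → ℝ} {w : (Fin 3 → ℝ) → ℝ}

lemma adv3_eq_fderiv : adv3 v w g x
    = fderiv ℝ g x (v 0 x • Pi.single 0 1 + v 1 x • Pi.single 1 1 + w x • Pi.single 2 1) := by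
  simp [adv3, pd]

lemma adv3_add (hf : DifferentiableAt ℝ f x) (hg : DifferentiableAt ℝ g x) :
    adv3 v w (fun y => f y + g y) x = adv3 v w f x + adv3 v w g x := by
  simp [adv3_eq_fderiv, fderiv_fun_add hf hg]

lemma adv3_mul (hf : DifferentiableAt ℝ f x) (hg : DifferentiableAt ℝ g x) :
    adv3 v w (fun y => f y * g y) x = adv3 v w f x * g x + f x * adv3 v w g x := by
  simp [adv3_eq_fderiv, fderiv_fun_mul hf hg]; ring

lemma adv3_pow (hf : DifferentiableAt ℝ f x) (n : ℕ) :
    adv3 v w (fun y => f y ^ n) x = n * f x ^ (n - 1) * adv3 v w f x := by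
  simp [adv3_eq_fderiv, fderiv_fun_pow n hf]

lemma adv3_vint {h : ℝ} (hf : ContDiff ℝ 1 f) :
    adv3 v w (vint h f) x = advH v (vint h f) x + w x * f x := by
  rw [adv3, advH, pd_two_vint hf]

@[fun_prop]
lemma continuous_advH (hv : ∀ i, Continuous (v i)) (hg : ContDiff ℝ 1 g) :
    Continuous (advH v g) := by
  unfold advH; fun_prop

@[fun_prop]
lemma continuous_adv3 (hv : ∀ i, Continuous (v i)) (hw : Continuous w) (hg : ContDiff ℝ 1 g) :
    Continuous (adv3 v w g) := by
  unfold adv3; fun_prop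

@[fun_prop]
lemma continuous_divH (hv : ∀ i, ContDiff ℝ 1 (v i)) : Continuous (divH v) := by
  unfold divH; fun_prop

lemma adv3_sq_vint_mul_sum_sq {h : ℝ} {θ : (Fin 3 → ℝ) → ℝ} (hv : ∀ i, ContDiff ℝ 1 (v i))
    (hθ : ContDiff ℝ 1 θ) :
    adv3 v w (fun y => vint h θ y ^ 2 * ∑ i, v i y ^ 2) x
      = 2 * (vint h θ x ^ 2 * ∑ i, v i x * adv3 v w (v i) x
        + (∑ i, v i x ^ 2) * vint h θ x * (advH v (vint h θ) x + w x * θ x)) := by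
  have hv₀ := (hv 0).differentiable one_ne_zero
  have hv₁ := (hv 1).differentiable one_ne_zero
  have hΘ := (contDiff_one_vint hθ h).differentiable one_ne_zero
  simp only [Fin.sum_univ_two]
  simp (disch := fun_prop) only [adv3_mul, adv3_add, adv3_pow, adv3_vint hθ]
  push_cast
  ring

end PartialDerivatives

section VerticalVelocity

variable {h : ℝ} {v : Fin 2 → (Fin 3 → ℝ) → ℝ}

lemma contDiff_divH {n : ℕ} (hv : ∀ i, ContDiff ℝ (n + 1) (v i)) : ContDiff ℝ n (divH v) :=
  (contDiff_pd (hv 0) 0).add (contDiff_pd (hv 1) 1)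

lemma contDiff_one_wv (hv : ∀ i, ContDiff ℝ 2 (v i)) : ContDiff ℝ 1 (wv h v) :=
  (contDiff_one_vint (contDiff_divH hv) h).neg

lemma pd_two_wv (hv : ∀ i, ContDiff ℝ 2 (v i)) (x : Fin 3 → ℝ) : pd 2 (wv h v) x = -divH v x := by
  rw [show wv h v = fun y => -vint h (divH v) y from rfl, pd_neg, pd_two_vint (contDiff_divH hv)]

lemma wv_update_two (x : Fin 3 → ℝ) (t : ℝ) :
    wv h v (update x 2 t) = -∫ s in (-h)..t, divH v (update x 2 s) := by
  simp [wv]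

lemma integral_adv3_wv_comp_update_two (hv : ∀ i, ContDiff ℝ 1 (v i)) {θ : (Fin 3 → ℝ) → ℝ}
    (hθ : ContDiff ℝ 1 θ) (x : Fin 3 → ℝ) :
    ∫ ζ in (-h)..x 2, adv3 v (wv h v) θ (update x 2 ζ)
      = (∫ ζ in (-h)..x 2, advH v θ (update x 2 ζ)) + wv h v x * θ x
        + ∫ ζ in (-h)..x 2, divH v (update x 2 ζ) * θ (update x 2 ζ) := by
  have hvc (i : Fin 2) : Continuous (v i) := (hv i).continuous
  have hdiv : Continuous (divH v) := continuous_divH hv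
  have hwc : Continuous (wv h v) := (continuous_vint hdiv h).neg
  have hw (t : ℝ) : HasDerivAt (fun t => wv h v (update x 2 t)) (-divH v (update x 2 t)) t := by
    simp only [wv_update_two]
    exact (Continuous.integral_hasStrictDerivAt (by fun_prop) (-h) t).hasDerivAt.neg
  have hθ' (t : ℝ) : HasDerivAt (fun t => θ (update x 2 t)) (pd 2 θ (update x 2 t)) t :=
    hasDerivAt_comp_update_two ((hθ.differentiable one_ne_zero) _)
  have hibp := integral_mul_deriv_eq_deriv_mul (a := -h) (b := x 2) (fun t _ => hw t)
    (fun t _ => hθ' t) (Continuous.intervalIntegrable (by fun_prop) _ _)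
    (Continuous.intervalIntegrable (by fun_prop) _ _)
  have hI : IntervalIntegrable (fun ζ => advH v θ (update x 2 ζ)) volume (-h) (x 2) :=
    Continuous.intervalIntegrable (by fun_prop) _ _
  have hII : IntervalIntegrable (fun ζ => wv h v (update x 2 ζ) * pd 2 θ (update x 2 ζ))
      volume (-h) (x 2) :=
    Continuous.intervalIntegrable (by fun_prop) _ _
  rw [show (fun ζ => adv3 v (wv h v) θ (update x 2 ζ)) = fun ζ => advH v θ (update x 2 ζ)
      + wv h v (update x 2 ζ) * pd 2 θ (update x 2 ζ) from rfl, integral_add hI hII, hibp]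
  simp [wv_update_two, add_assoc]

lemma integrand_lhs_eq_half_adv3_add_integrand_rhs (hv : ∀ i, ContDiff ℝ 1 (v i))
    {θ : (Fin 3 → ℝ) → ℝ} (hθ : ContDiff ℝ 1 θ) (x : Fin 3 → ℝ) :
    vint h θ x ^ 2 * (∑ i, v i x * adv3 v (wv h v) (v i) x)
        + (∑ i, v i x ^ 2) * vint h θ x
          * (∫ ζ in (-h)..x 2, adv3 v (wv h v) θ (update x 2 ζ))
      = 2⁻¹ * adv3 v (wv h v) (fun y => vint h θ y ^ 2 * ∑ i, v i y ^ 2) x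
        + (∑ i, v i x ^ 2) * vint h θ x
          * ((∫ ζ in (-h)..x 2, advH v θ (update x 2 ζ)) - advH v (vint h θ) x
            + ∫ ζ in (-h)..x 2, divH v (update x 2 ζ) * θ (update x 2 ζ)) := by
  rw [integral_adv3_wv_comp_update_two hv hθ, adv3_sq_vint_mul_sum_sq hv hθ]
  ring

end VerticalVelocity

section PeriodicLayer

lemma insertNth_add_one_eq (i : Fin 3) (c : ℝ) (y : Fin 2 → ℝ) :
    Fin.insertNth (α := fun _ => ℝ) i (c + 1) y
      = Fin.insertNth (α := fun _ => ℝ) i c y + Pi.single i 1 := by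
  ext j
  rcases eq_or_ne j i with rfl | hj
  · simp
  · obtain ⟨k, rfl⟩ := Fin.exists_succAbove_eq hj
    simp

lemma integrableOn_box {f : (Fin 3 → ℝ) → ℝ} (hf : Continuous f) (h : ℝ) : IntegrableOn f (Box h) :=
  hf.continuousOn.integrableOn_compact isCompact_Icc

lemma integral_box_sum_pd_eq_zero {h : ℝ} (hh : 0 ≤ h) {f : Fin 3 → (Fin 3 → ℝ) → ℝ}
    (hf : ∀ i, ContDiff ℝ 1 (f i)) (hf₀ : ∀ x, f 0 (x + Pi.single 0 1) = f 0 x)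
    (hf₁ : ∀ x, f 1 (x + Pi.single 1 1) = f 1 x)
    (hf₂ : ∀ x : Fin 3 → ℝ, x 2 = 0 ∨ x 2 = -h → f 2 x = 0) :
    ∫ x in Box h, ∑ i, pd i (f i) x = 0 := by
  have hle : (![0, 0, -h] : Fin 3 → ℝ) ≤ ![1, 1, 0] := by
    intro i; fin_cases i <;> simp [hh]
  refine (integral_divergence_of_hasFDerivAt_off_countable' _ _ hle f
    (fun i x => fderiv ℝ (f i) x) ∅
    Set.countable_empty (fun i => (hf i).continuous.continuousOn)
    (fun x _ i => ((hf i).differentiable one_ne_zero x).hasFDerivAt)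
    (integrableOn_box (continuous_finsetSum _ fun i _ => continuous_pd (hf i) i) h)).trans ?_
  rw [Fin.sum_univ_three]
  have hper (i : Fin 3) (hi : ∀ x, f i (x + Pi.single i 1) = f i x) {a b : ℝ} (hab : b = a + 1)
      (s : Set (Fin 2 → ℝ)) :
      ∫ y in s, f i (Fin.insertNth i b y) = ∫ y in s, f i (Fin.insertNth i a y) := by
    simp_rw [hab, insertNth_add_one_eq, hi]
  have hvert {c : ℝ} (hc : c = 0 ∨ c = -h) (s : Set (Fin 2 → ℝ)) :
      ∫ y in s, f 2 (Fin.insertNth 2 c y) = 0 :=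
    integral_eq_zero_of_ae (ae_of_all _ fun y => hf₂ _ (by simpa using hc))
  rw [hper 0 hf₀ (a := ![0, 0, -h] 0) (b := ![1, 1, 0] 0) (by simp),
    hper 1 hf₁ (a := ![0, 0, -h] 1) (b := ![1, 1, 0] 1) (by simp),
    hvert (c := ![1, 1, 0] 2) (by simp), hvert (c := ![0, 0, -h] 2) (by simp)]
  simp

lemma integral_box_adv3_wv_eq_zero {h : ℝ} (hh : 0 ≤ h) {v : Fin 2 → (Fin 3 → ℝ) → ℝ}
    (hv : ∀ i, ContDiff ℝ 2 (v i)) (hv_per : ∀ i, HorizPeriodic (v i))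
    (hdiv : ∀ x : Fin 3 → ℝ, ∫ ζ in (-h)..(0 : ℝ), divH v (update x 2 ζ) = 0)
    {F : (Fin 3 → ℝ) → ℝ} (hF : ContDiff ℝ 1 F) (hF_per : HorizPeriodic F) :
    ∫ x in Box h, adv3 v (wv h v) F x = 0 := by
  have hv₁ (i : Fin 2) : ContDiff ℝ 1 (v i) := (hv i).of_le (by norm_num)
  have hw := contDiff_one_wv (h := h) hv
  let f : Fin 3 → (Fin 3 → ℝ) → ℝ :=
    ![fun y => v 0 y * F y, fun y => v 1 y * F y, fun y => wv h v y * F y]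
  have hflux (x : Fin 3 → ℝ) : ∑ i, pd i (f i) x = adv3 v (wv h v) F x := by
    have hd {g : (Fin 3 → ℝ) → ℝ} (hg : ContDiff ℝ 1 g) : DifferentiableAt ℝ g x :=
      (hg.differentiable one_ne_zero) x
    simp only [Fin.sum_univ_three, f, Matrix.cons_val_zero, Matrix.cons_val_one,
      Matrix.cons_val_two, Matrix.head_cons, Matrix.tail_cons,
      pd_mul (hd (hv₁ 0)) (hd hF), pd_mul (hd (hv₁ 1)) (hd hF), pd_mul (hd hw) (hd hF),
      pd_two_wv hv, adv3, divH]
    ring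
  simp_rw [← hflux]
  refine integral_box_sum_pd_eq_zero hh (fun i => ?_) (fun x => ?_) (fun x => ?_) ?_
  · fin_cases i
    exacts [(hv₁ 0).mul hF, (hv₁ 1).mul hF, hw.mul hF]
  · simp [f, (hv_per 0 x).1, (hF_per x).1]
  · simp [f, (hv_per 1 x).2, (hF_per x).2]
  · rintro x (hx | hx) <;> simp [f, wv, hx, hdiv]

end PeriodicLayer

/-- Lemma 6.2, cancellation with the hydrostatic vertical velocity. -/
theorem statement1
    (h : ℝ) (hh : 0 < h)
    (v : Fin 2 → (Fin 3 → ℝ) → ℝ)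
    (hv_smooth : ∀ i, ContDiff ℝ (⊤ : ℕ∞) (v i))
    (hv_per : ∀ i, HorizPeriodic (v i))
    (θ : (Fin 3 → ℝ) → ℝ)
    (hθ_smooth : ContDiff ℝ (⊤ : ℕ∞) θ) (hθ_per : HorizPeriodic θ)
    (hdiv : ∀ x : Fin 3 → ℝ, (∫ ζ in (-h)..(0:ℝ), divH v (Function.update x 2 ζ)) = 0) :
    (∫ x in Box h, (vint h θ x) ^ 2 * (∑ i, v i x * adv3 v (wv h v) (v i) x))
      + (∫ x in Box h,
          (∑ i, v i x ^ 2) * vint h θ x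
            * (∫ ζ in (-h)..(x 2), adv3 v (wv h v) θ (Function.update x 2 ζ)))
    = ∫ x in Box h,
        (∑ i, v i x ^ 2) * vint h θ x
          * ((∫ ζ in (-h)..(x 2), advH v θ (Function.update x 2 ζ))
              - advH v (vint h θ) x
              + (∫ ζ in (-h)..(x 2),
                  divH v (Function.update x 2 ζ) * θ (Function.update x 2 ζ))) := by
  have hv₂ (i : Fin 2) : ContDiff ℝ 2 (v i) := (hv_smooth i).of_le (WithTop.coe_le_coe.2 le_top)
  have hv₁ (i : Fin 2) : ContDiff ℝ 1 (v i) := (hv_smooth i).of_le (WithTop.coe_le_coe.2 le_top)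
  have hθ₁ : ContDiff ℝ 1 θ := hθ_smooth.of_le (WithTop.coe_le_coe.2 le_top)
  have hvc (i : Fin 2) : Continuous (v i) := (hv₁ i).continuous
  have hΘ : ContDiff ℝ 1 (vint h θ) := contDiff_one_vint hθ₁ h
  have hw : Continuous (wv h v) := (contDiff_one_wv hv₂).continuous
  have hF : ContDiff ℝ 1 fun x => vint h θ x ^ 2 * ∑ i, v i x ^ 2 := by fun_prop
  have hF_per : HorizPeriodic fun x => vint h θ x ^ 2 * ∑ i, v i x ^ 2 := fun x => by
    simp [(hθ_per.vint h x).1, (hθ_per.vint h x).2, (hv_per _ x).1, (hv_per _ x).2]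
  rw [← integral_add (integrableOn_box ?_ h) (integrableOn_box ?_ h)]
  · simp only [integrand_lhs_eq_half_adv3_add_integrand_rhs hv₁ hθ₁]
    rw [integral_add ((integrableOn_box ?_ h).const_mul _) (integrableOn_box ?_ h),
      MeasureTheory.integral_const_mul,
      integral_box_adv3_wv_eq_zero hh.le hv₂ hv_per hdiv hF hF_per, mul_zero, zero_add]
    all_goals fun_prop
  all_goals fun_prop
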